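/- arXiv:1401.5669 — 2 statements merged into one kernel-verified Lean document; each statement's English description precedes it below -/
import Mathlib

section
/- Let φ, ψ : ℝ² → ℝ be smooth with compact support. Then ∫_{ℝ²} ‖∇φ + rot′ψ‖² dx = ∫_{ℝ²} ‖∇φ‖² dx + ∫_{ℝ²} ‖∇ψ‖² dx. -/
open MeasureTheory

/-- The plane `ℝ²` with the Euclidean norm and Lebesgue measure. -/
abbrev E2 : Type := EuclideanSpace ℝ (Fin 2)

/-- Partial derivative of `f : ℝ² → ℝ` in the `i`-th coordinate direction. -/
noncomputable def pd (i : Fin 2) (f : E2 → ℝ) (x : E2) : ℝ :=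
  fderiv ℝ f x (EuclideanSpace.single i 1)

private lemma pd_contDiff {f : E2 → ℝ} (hf : ContDiff ℝ (⊤ : ℕ∞) f) (i : Fin 2) :
    ContDiff ℝ (⊤ : ℕ∞) (pd i f) :=
  (hf.fderiv_right (by simp)).clm_apply contDiff_const

private lemma pd_supp {f : E2 → ℝ} (hf : HasCompactSupport f) (i : Fin 2) :
    HasCompactSupport (pd i f) :=
  (hf.fderiv ℝ).comp_left (g := fun L : E2 →L[ℝ] ℝ ↦ L (EuclideanSpace.single i 1)) rfl

private lemma cross_eq (φ ψ : E2 → ℝ) (hφ : ContDiff ℝ (⊤ : ℕ∞) φ) (hψ : ContDiff ℝ (⊤ : ℕ∞) ψ)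
    (hφsupp : HasCompactSupport φ) (hψsupp : HasCompactSupport ψ) :
    ∫ x : E2, pd 0 φ x * pd 1 ψ x = ∫ x : E2, pd 1 φ x * pd 0 ψ x := by
  have hφd : Differentiable ℝ φ := hφ.differentiable (by simp)
  have hfψ : ContDiff ℝ (⊤ : ℕ∞) (fderiv ℝ ψ) := hψ.fderiv_right (by simp)
  have hfψd : Differentiable ℝ (fderiv ℝ ψ) := hfψ.differentiable (by simp)
  have key : ∀ i j : Fin 2,
      ∫ x : E2, pd i φ x * pd j ψ x =
        - ∫ x : E2, φ x *
          fderiv ℝ (fderiv ℝ ψ) x (EuclideanSpace.single i 1) (EuclideanSpace.single j 1) := by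
    intro i j
    set vi : E2 := EuclideanSpace.single i 1
    set vj : E2 := EuclideanSpace.single j 1
    set g : E2 → ℝ := fun x ↦ fderiv ℝ ψ x vj with hg
    have hgc : ContDiff ℝ (⊤ : ℕ∞) g := hfψ.clm_apply contDiff_const
    have hgd : Differentiable ℝ g := hgc.differentiable (by simp)
    have hgfderiv : ∀ x : E2, fderiv ℝ g x vi = fderiv ℝ (fderiv ℝ ψ) x vi vj := by
      intro x
      have h : HasFDerivAt g
          ((ContinuousLinearMap.apply ℝ ℝ vj).comp (fderiv ℝ (fderiv ℝ ψ) x)) x :=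
        (ContinuousLinearMap.apply ℝ ℝ vj).hasFDerivAt.comp x (hfψd x).hasFDerivAt
      rw [h.fderiv]
      rfl
    have hgs : HasCompactSupport g :=
      (hψsupp.fderiv ℝ).comp_left (g := fun L : E2 →L[ℝ] ℝ ↦ L vj) rfl
    have hgc'' : ContDiff ℝ (⊤ : ℕ∞) (fun x ↦ fderiv ℝ g x vi) :=
      (hgc.fderiv_right (by simp)).clm_apply contDiff_const
    have hgc' : Continuous fun x ↦ fderiv ℝ g x vi := hgc''.continuous
    have hI1 : Integrable (fun x : E2 ↦ fderiv ℝ φ x vi * g x) :=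
      (((pd_contDiff hφ i).continuous).mul hgc.continuous).integrable_of_hasCompactSupport
        (hgs.mul_left)
    have hI2 : Integrable (fun x : E2 ↦ φ x * fderiv ℝ g x vi) :=
      (hφ.continuous.mul hgc').integrable_of_hasCompactSupport hφsupp.mul_right
    have hI3 : Integrable (fun x : E2 ↦ φ x * g x) :=
      (hφ.continuous.mul hgc.continuous).integrable_of_hasCompactSupport hφsupp.mul_right
    have := integral_mul_fderiv_eq_neg_fderiv_mul_of_integrable hI1 hI2 hI3 (fun x _ ↦ hφd x) (fun x _ ↦ hgd x) (v := vi)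
    have heq : ∫ x : E2, pd i φ x * pd j ψ x = ∫ x : E2, fderiv ℝ φ x vi * g x := rfl
    have h2 : ∫ x : E2, fderiv ℝ φ x vi * g x = - ∫ x : E2, φ x * fderiv ℝ g x vi := by
      linarith [this]
    rw [heq, h2]
    congr 1
    exact integral_congr_ae (Filter.Eventually.of_forall fun x ↦ congrArg (fun t ↦ φ x * t) (hgfderiv x))
  rw [key 0 1, key 1 0]
  congr 1
  refine integral_congr_ae (Filter.Eventually.of_forall fun x ↦ ?_)
  have hsymm : IsSymmSndFDerivAt ℝ ψ x :=
    (hψ.contDiffAt).isSymmSndFDerivAt (by rw [minSmoothness_of_isRCLikeNormedField]; exact WithTop.coe_le_coe.mpr le_top)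
  exact congrArg (fun t ↦ φ x * t) (hsymm.eq _ _)

theorem stmt_12 (φ ψ : E2 → ℝ) (hφ : ContDiff ℝ (⊤ : ℕ∞) φ) (hψ : ContDiff ℝ (⊤ : ℕ∞) ψ)
    (hφsupp : HasCompactSupport φ) (hψsupp : HasCompactSupport ψ) :
    ∫ x : E2, ((pd 0 φ x + pd 1 ψ x) ^ 2 + (pd 1 φ x - pd 0 ψ x) ^ 2) =
      (∫ x : E2, ((pd 0 φ x) ^ 2 + (pd 1 φ x) ^ 2)) +
        ∫ x : E2, ((pd 0 ψ x) ^ 2 + (pd 1 ψ x) ^ 2) := by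
  have hc : ∀ i : Fin 2, Continuous (pd i φ) := fun i ↦ (pd_contDiff hφ i).continuous
  have hcψ : ∀ i : Fin 2, Continuous (pd i ψ) := fun i ↦ (pd_contDiff hψ i).continuous
  have hIprod : ∀ (i j : Fin 2) (f g : E2 → ℝ), Continuous f → Continuous g →
      HasCompactSupport g → Integrable (fun x : E2 ↦ f x * g x) := fun i j f g hf hg hgs ↦
    (hf.mul hg).integrable_of_hasCompactSupport hgs.mul_left
  have Iφφ : ∀ i j : Fin 2, Integrable (fun x : E2 ↦ pd i φ x * pd j φ x) :=
    fun i j ↦ hIprod i j _ _ (hc i) (hc j) (pd_supp hφsupp j)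
  have Iψψ : ∀ i j : Fin 2, Integrable (fun x : E2 ↦ pd i ψ x * pd j ψ x) :=
    fun i j ↦ hIprod i j _ _ (hcψ i) (hcψ j) (pd_supp hψsupp j)
  have Iφψ : ∀ i j : Fin 2, Integrable (fun x : E2 ↦ pd i φ x * pd j ψ x) :=
    fun i j ↦ hIprod i j _ _ (hc i) (hcψ j) (pd_supp hψsupp j)
  have hcross := cross_eq φ ψ hφ hψ hφsupp hψsupp
  have expand : ∀ x : E2,
      (pd 0 φ x + pd 1 ψ x) ^ 2 + (pd 1 φ x - pd 0 ψ x) ^ 2 =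
        ((pd 0 φ x * pd 0 φ x + pd 1 φ x * pd 1 φ x) +
          (pd 0 ψ x * pd 0 ψ x + pd 1 ψ x * pd 1 ψ x)) +
          ((2 : ℝ) * (pd 0 φ x * pd 1 ψ x) - (2 : ℝ) * (pd 1 φ x * pd 0 ψ x)) := fun x ↦ by ring
  have sq : ∀ (f : E2 → ℝ) (x : E2), f x ^ 2 = f x * f x := fun f x ↦ sq (f x)
  calc ∫ x : E2, ((pd 0 φ x + pd 1 ψ x) ^ 2 + (pd 1 φ x - pd 0 ψ x) ^ 2)
      = ∫ x : E2, (((pd 0 φ x * pd 0 φ x + pd 1 φ x * pd 1 φ x) +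
          (pd 0 ψ x * pd 0 ψ x + pd 1 ψ x * pd 1 ψ x)) +
          ((2 : ℝ) * (pd 0 φ x * pd 1 ψ x) - (2 : ℝ) * (pd 1 φ x * pd 0 ψ x))) := by
        exact integral_congr_ae (Filter.Eventually.of_forall expand)
    _ = (∫ x : E2, ((pd 0 φ x * pd 0 φ x + pd 1 φ x * pd 1 φ x) +
          (pd 0 ψ x * pd 0 ψ x + pd 1 ψ x * pd 1 ψ x))) +
        ∫ x : E2, ((2 : ℝ) * (pd 0 φ x * pd 1 ψ x) - (2 : ℝ) * (pd 1 φ x * pd 0 ψ x)) := by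
        exact integral_add (((Iφφ 0 0).add (Iφφ 1 1)).add ((Iψψ 0 0).add (Iψψ 1 1)))
          (((Iφψ 0 1).const_mul 2).sub ((Iφψ 1 0).const_mul 2))
    _ = (∫ x : E2, ((pd 0 φ x) ^ 2 + (pd 1 φ x) ^ 2)) +
        ∫ x : E2, ((pd 0 ψ x) ^ 2 + (pd 1 ψ x) ^ 2) := by
        have hzero : (∫ x : E2, ((2 : ℝ) * (pd 0 φ x * pd 1 ψ x) -
            (2 : ℝ) * (pd 1 φ x * pd 0 ψ x))) = 0 := by
          rw [integral_sub ((Iφψ 0 1).const_mul 2) ((Iφψ 1 0).const_mul 2),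
            integral_const_mul, integral_const_mul, hcross, sub_self]
        have hA : (∫ x : E2, ((pd 0 φ x * pd 0 φ x + pd 1 φ x * pd 1 φ x) +
              (pd 0 ψ x * pd 0 ψ x + pd 1 ψ x * pd 1 ψ x))) =
            (∫ x : E2, (pd 0 φ x * pd 0 φ x + pd 1 φ x * pd 1 φ x)) +
              ∫ x : E2, (pd 0 ψ x * pd 0 ψ x + pd 1 ψ x * pd 1 ψ x) :=
          integral_add ((Iφφ 0 0).add (Iφφ 1 1)) ((Iψψ 0 0).add (Iψψ 1 1))
        rw [hzero, add_zero, hA]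
        congr 1 <;>
          exact integral_congr_ae (Filter.Eventually.of_forall fun x ↦ by ring)
end

section
/- Let v = (v₁, v₂) : ℝ² → ℝ² be smooth with compact support, and let 𝒟v := (∂₁v₁, ∂₂v₂, ∂₂v₁ + ∂₁v₂). Then ∫_{ℝ²} ‖𝒟v‖² dx = ∫_{ℝ²} (div v)² dx + ∫_{ℝ²} ((∂₂v₁)² + (∂₁v₂)²) dx. -/
open MeasureTheory

namespace Stmt15Aux

noncomputable def ee (i : Fin 2) : E2 := EuclideanSpace.single i 1

lemma pd_contDiff (f : E2 → ℝ) (hf : ContDiff ℝ (⊤ : ℕ∞) f) (i : Fin 2) :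
    ContDiff ℝ (⊤ : ℕ∞) (pd i f) :=
  (ContinuousLinearMap.apply ℝ ℝ (ee i)).contDiff.comp (hf.fderiv_right (by simp))

lemma pd_hcs (f : E2 → ℝ) (hfs : HasCompactSupport f) (i : Fin 2) :
    HasCompactSupport (pd i f) :=
  (HasCompactSupport.fderiv (𝕜 := ℝ) hfs).comp_left (g := fun L : E2 →L[ℝ] ℝ => L (ee i)) rfl

lemma integ_mul (p q : E2 → ℝ) (hp : Continuous p) (hq : Continuous q)
    (hps : HasCompactSupport p) : Integrable (fun x => p x * q x) :=
  (hp.mul hq).integrable_of_hasCompactSupport hps.mul_right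

lemma ibp (f g : E2 → ℝ) (hf : ContDiff ℝ (⊤ : ℕ∞) f) (hg : ContDiff ℝ (⊤ : ℕ∞) g)
    (hfs : HasCompactSupport f) (i j : Fin 2) :
    ∫ x : E2, pd i f x * pd j g x =
      - ∫ x : E2, f x * fderiv ℝ (fderiv ℝ g) x (ee i) (ee j) := by
  set G : E2 → ℝ := pd j g with hG
  have hGc : ContDiff ℝ (⊤ : ℕ∞) G := pd_contDiff g hg j
  have hdg : Differentiable ℝ (fderiv ℝ g) := (hg.fderiv_right (m := (⊤ : ℕ∞)) (by simp)).differentiable (by simp)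
  have hfd : ∀ x : E2, fderiv ℝ G x (ee i) = fderiv ℝ (fderiv ℝ g) x (ee i) (ee j) := by
    intro x
    have h1 : HasFDerivAt G
        ((ContinuousLinearMap.apply ℝ ℝ (ee j)).comp (fderiv ℝ (fderiv ℝ g) x)) x :=
      (ContinuousLinearMap.apply ℝ ℝ (ee j)).hasFDerivAt.comp x (hdg x).hasFDerivAt
    rw [h1.fderiv]; rfl
  have key : ∫ x : E2, f x * fderiv ℝ G x (ee i) = - ∫ x : E2, fderiv ℝ f x (ee i) * G x := by
    apply integral_mul_fderiv_eq_neg_fderiv_mul_of_integrable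
    · exact integ_mul _ _ (pd_contDiff f hf i).continuous hGc.continuous (pd_hcs f hfs i)
    · have : Continuous fun x : E2 => fderiv ℝ G x (ee i) := by
        have := (pd_contDiff G hGc i).continuous
        exact this
      exact (integ_mul _ _ hf.continuous this hfs)
    · exact integ_mul _ _ hf.continuous hGc.continuous hfs
    · exact fun x _ => hf.differentiable (by simp) x
    · exact fun x _ => hGc.differentiable (by simp) x
  have h2 : ∫ x : E2, f x * fderiv ℝ G x (ee i) =
      ∫ x : E2, f x * fderiv ℝ (fderiv ℝ g) x (ee i) (ee j) :=
    integral_congr_ae (Filter.Eventually.of_forall (fun x => congrArg (fun t => f x * t) (hfd x)))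
  have : ∫ x : E2, pd i f x * G x = ∫ x : E2, fderiv ℝ f x (ee i) * G x := rfl
  rw [this, ← h2, key, neg_neg]

lemma swap (f g : E2 → ℝ) (hf : ContDiff ℝ (⊤ : ℕ∞) f) (hg : ContDiff ℝ (⊤ : ℕ∞) g)
    (hfs : HasCompactSupport f) :
    ∫ x : E2, pd 0 f x * pd 1 g x = ∫ x : E2, pd 1 f x * pd 0 g x := by
  rw [ibp f g hf hg hfs 0 1, ibp f g hf hg hfs 1 0]
  congr 1
  refine integral_congr_ae (Filter.Eventually.of_forall (fun x => ?_))
  have hs : IsSymmSndFDerivAt ℝ g x :=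
    hg.contDiffAt.isSymmSndFDerivAt (by rw [minSmoothness_of_isRCLikeNormedField]; exact WithTop.coe_le_coe.mpr le_top)
  exact congrArg (fun t => f x * t) (hs (ee 0) (ee 1))

end Stmt15Aux

open Stmt15Aux in
theorem stmt_15 (v : E2 → E2) (hv : ContDiff ℝ (⊤ : ℕ∞) v) (hvsupp : HasCompactSupport v) :
    ∫ x : E2, ((pd 0 (fun y => v y 0) x) ^ 2 + (pd 1 (fun y => v y 1) x) ^ 2 +
        (pd 1 (fun y => v y 0) x + pd 0 (fun y => v y 1) x) ^ 2) =
      (∫ x : E2, (pd 0 (fun y => v y 0) x + pd 1 (fun y => v y 1) x) ^ 2) +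
        ∫ x : E2, ((pd 1 (fun y => v y 0) x) ^ 2 + (pd 0 (fun y => v y 1) x) ^ 2) := by
  set f : E2 → ℝ := fun y => v y 0 with hf0
  set g : E2 → ℝ := fun y => v y 1 with hg0
  have hf : ContDiff ℝ (⊤ : ℕ∞) f := by
    have h := (EuclideanSpace.proj (0 : Fin 2)).contDiff.comp hv
    exact h
  have hg : ContDiff ℝ (⊤ : ℕ∞) g := by
    have h := (EuclideanSpace.proj (1 : Fin 2)).contDiff.comp hv
    exact h
  have hfs : HasCompactSupport f :=
    hvsupp.comp_left (g := fun z : E2 => z 0) rfl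
  have hgs : HasCompactSupport g :=
    hvsupp.comp_left (g := fun z : E2 => z 1) rfl
  set a := pd 0 f
  set b := pd 1 g
  set c := pd 1 f
  set d := pd 0 g
  have ha : Continuous a := (pd_contDiff f hf 0).continuous
  have hb : Continuous b := (pd_contDiff g hg 1).continuous
  have hc : Continuous c := (pd_contDiff f hf 1).continuous
  have hd : Continuous d := (pd_contDiff g hg 0).continuous
  have has : HasCompactSupport a := pd_hcs f hfs 0
  have hbs : HasCompactSupport b := pd_hcs g hgs 1
  have hcs : HasCompactSupport c := pd_hcs f hfs 1
  have hds : HasCompactSupport d := pd_hcs g hgs 0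
  have Iaa : Integrable (fun x => a x * a x) := integ_mul a a ha ha has
  have Ibb : Integrable (fun x => b x * b x) := integ_mul b b hb hb hbs
  have Icc : Integrable (fun x => c x * c x) := integ_mul c c hc hc hcs
  have Idd : Integrable (fun x => d x * d x) := integ_mul d d hd hd hds
  have Iab : Integrable (fun x => a x * b x) := integ_mul a b ha hb has
  have Icd : Integrable (fun x => c x * d x) := integ_mul c d hc hd hcs
  have hswap : ∫ x : E2, a x * b x = ∫ x : E2, c x * d x := swap f g hf hg hfs
  have eLHS : ∫ x : E2, (a x ^ 2 + b x ^ 2 + (c x + d x) ^ 2) =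
      ((((∫ x : E2, a x * a x) + ∫ x : E2, b x * b x) + ∫ x : E2, c x * c x)
        + ∫ x : E2, d x * d x) + 2 * ∫ x : E2, c x * d x := by
    calc ∫ x : E2, (a x ^ 2 + b x ^ 2 + (c x + d x) ^ 2)
        = ∫ x : E2, ((a x * a x + b x * b x + c x * c x + d x * d x) + 2 * (c x * d x)) :=
          integral_congr_ae (Filter.Eventually.of_forall (fun x => by ring))
      _ = (∫ x : E2, (a x * a x + b x * b x + c x * c x + d x * d x))
            + ∫ x : E2, 2 * (c x * d x) :=
          integral_add (((Iaa.add Ibb).add Icc).add Idd) (Icd.const_mul 2)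
      _ = (((∫ x : E2, a x * a x) + ∫ x : E2, b x * b x) + ∫ x : E2, c x * c x)
            + (∫ x : E2, d x * d x) + ∫ x : E2, 2 * (c x * d x) := by
          rw [integral_add (f := fun x => a x * a x + b x * b x + c x * c x)
              (g := fun x => d x * d x) ((Iaa.add Ibb).add Icc) Idd,
            integral_add (f := fun x => a x * a x + b x * b x) (g := fun x => c x * c x)
              (Iaa.add Ibb) Icc,
            integral_add (f := fun x => a x * a x) (g := fun x => b x * b x) Iaa Ibb]
      _ = _ := by rw [integral_const_mul]
  have eR1 : ∫ x : E2, (a x + b x) ^ 2 =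
      (((∫ x : E2, a x * a x) + ∫ x : E2, b x * b x) + 2 * ∫ x : E2, a x * b x) := by
    calc ∫ x : E2, (a x + b x) ^ 2
        = ∫ x : E2, ((a x * a x + b x * b x) + 2 * (a x * b x)) :=
          integral_congr_ae (Filter.Eventually.of_forall (fun x => by ring))
      _ = (∫ x : E2, (a x * a x + b x * b x)) + ∫ x : E2, 2 * (a x * b x) :=
          integral_add (Iaa.add Ibb) (Iab.const_mul 2)
      _ = _ := by rw [integral_add (f := fun x => a x * a x) (g := fun x => b x * b x) Iaa Ibb, integral_const_mul]
  have eR2 : ∫ x : E2, (c x ^ 2 + d x ^ 2) =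
      ((∫ x : E2, c x * c x) + ∫ x : E2, d x * d x) := by
    calc ∫ x : E2, (c x ^ 2 + d x ^ 2)
        = ∫ x : E2, (c x * c x + d x * d x) :=
          integral_congr_ae (Filter.Eventually.of_forall (fun x => by ring))
      _ = _ := integral_add Icc Idd
  rw [eLHS, eR1, eR2, hswap]
  ring
end
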